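/- For any t > π, the map θ ↦ x(θ,t) = −sin(θ − t sin θ)/sin θ is strictly decreasing on the interval (0, arcsin(π/t)]. -/

import Mathlib

/-!
With `s = t sin θ`, the derivative of `θ ↦ -sin (θ - s) / sin θ` has numerator
`s cos θ cos (θ - s) - sin s`. Since `2 cos θ cos (θ - s) = cos s + cos (2θ - s) ≤ 1 + cos s`, it
suffices that `s (1 + cos s) < 2 sin s` for `0 < s < π`, which after halving the angle is
`tan (s/2) > s/2`. On `(0, arcsin (π / t))` we have exactly `0 < s < π`.
-/

open Real Set

lemma mul_cos_lt_sin {y : ℝ} (h0 : 0 < y) (hy : y < π / 2) : y * cos y < sin y := by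
  have hcos : 0 < cos y := cos_pos_of_mem_Ioo ⟨by linarith [pi_pos], hy⟩
  have := lt_tan h0 hy
  rwa [tan_eq_sin_div_cos, lt_div_iff₀ hcos] at this

lemma mul_one_add_cos_lt_two_mul_sin {x : ℝ} (h0 : 0 < x) (hx : x < π) :
    x * (1 + cos x) < 2 * sin x := by
  have hcos : 0 < cos (x / 2) := cos_pos_of_mem_Ioo ⟨by linarith [pi_pos], by linarith⟩
  have key := mul_lt_mul_of_pos_right (mul_cos_lt_sin (half_pos h0) (by linarith)) hcos
  have hx2 : x = 2 * (x / 2) := by ring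
  rw [hx2, sin_two_mul, cos_two_mul]
  nlinarith

lemma mul_cos_mul_cos_sub_lt_sin (θ : ℝ) {x : ℝ} (h0 : 0 < x) (hx : x < π) :
    x * cos θ * cos (θ - x) < sin x := by
  have hprod : 2 * cos θ * cos (θ - x) = cos x + cos (2 * θ - x) := by
    rw [two_mul_cos_mul_cos, sub_sub_cancel]
    congr 2
    ring
  have := mul_one_add_cos_lt_two_mul_sin h0 hx
  nlinarith [cos_le_one (2 * θ - x)]

lemma hasDerivAt_neg_sin_sub_mul_sin_div_sin (t : ℝ) {θ : ℝ} (hθ : sin θ ≠ 0) :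
    HasDerivAt (fun θ => -sin (θ - t * sin θ) / sin θ)
      ((t * sin θ * cos θ * cos (θ - t * sin θ) - sin (t * sin θ)) / sin θ ^ 2) θ := by
  have hinner : HasDerivAt (fun θ => θ - t * sin θ) (1 - t * cos θ) θ :=
    (hasDerivAt_id θ).sub ((hasDerivAt_sin θ).const_mul t)
  refine (((hasDerivAt_sin _).comp θ hinner).neg.div (hasDerivAt_sin θ) hθ).congr_deriv ?_
  have hsub : sin (t * sin θ) = sin θ * cos (θ - t * sin θ) - cos θ * sin (θ - t * sin θ) := by
    rw [← sin_sub, sub_sub_cancel]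
  rw [hsub]
  simp only [Pi.neg_apply, Function.comp_apply]
  ring

lemma mul_sin_mem_Ioo_of_mem_Ioo_arcsin {t θ : ℝ} (ht : 0 < t)
    (hθ : θ ∈ Ioo 0 (arcsin (π / t))) : t * sin θ ∈ Ioo 0 π := by
  have hθπ : θ < π / 2 := hθ.2.trans_le (arcsin_le_pi_div_two _)
  have hsin : sin θ < π / t :=
    (lt_arcsin_iff_sin_lt' ⟨by linarith [hθ.1], hθπ⟩).1 hθ.2
  exact ⟨mul_pos ht (sin_pos_of_pos_of_lt_pi hθ.1 (by linarith [pi_pos])),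
    by rwa [lt_div_iff₀' ht] at hsin⟩

/-- For any t > π, the map θ ↦ x(θ,t) = −sin(θ − t sin θ)/sin θ is strictly decreasing
    on (0, arcsin(π/t)]. -/
theorem grushin_x_strictAnti (t : ℝ) (ht : Real.pi < t) :
    StrictAntiOn (fun θ : ℝ => -Real.sin (θ - t * Real.sin θ) / Real.sin θ)
      (Set.Ioc 0 (Real.arcsin (Real.pi / t))) := by
  have harcsin : arcsin (π / t) < π := (arcsin_le_pi_div_two _).trans_lt (half_lt_self pi_pos)
  have hsin : ∀ θ ∈ Ioc 0 (arcsin (π / t)), sin θ ≠ 0 := fun θ hθ =>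
    (sin_pos_of_pos_of_lt_pi hθ.1 (hθ.2.trans_lt harcsin)).ne'
  refine strictAntiOn_of_hasDerivWithinAt_neg (convex_Ioc _ _)
    (fun θ hθ => (hasDerivAt_neg_sin_sub_mul_sin_div_sin t (hsin θ hθ)).continuousAt
      |>.continuousWithinAt)
    (fun θ hθ => (hasDerivAt_neg_sin_sub_mul_sin_div_sin t
      (hsin θ (interior_subset hθ))).hasDerivWithinAt) fun θ hθ => ?_
  rw [interior_Ioc] at hθ
  obtain ⟨hs0, hsπ⟩ := mul_sin_mem_Ioo_of_mem_Ioo_arcsin (pi_pos.trans ht) hθ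
  exact div_neg_of_neg_of_pos (sub_neg.2 (mul_cos_mul_cos_sub_lt_sin θ hs0 hsπ))
    (pow_two_pos_of_ne_zero (hsin θ (Ioo_subset_Ioc_self hθ)))
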